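/- arXiv:cond-mat/0702271 — 5 statements merged into one kernel-verified Lean document; each statement's English description precedes it below -/
import Mathlib

section
/- Let L_{0,0}(s), L_{0,1}(s), L_{1,0}(s), L_{1,1}(s) be the d×d matrices with entries (L_{0,0})^k_k = a(q^k s), (L_{1,1})^{d−k−1}_{d−k−1} = a(q^k s) for 0 ≤ k ≤ d−1, (L_{0,1})^{d−k−2}_{d−k−1} = (L_{1,0})^{k+1}_k = q^{k+1} − q^{−k−1} for 0 ≤ k ≤ d−2, all other entries zero. Then L_{0,0}(qs)·L_{1,1}(s) − L_{0,1}(qs)·L_{1,0}(s) = a(s)·a(q^d s)·I_d for all s ∈ ℂ*. -/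
/-- `qa qh s = s q^{-1/2} - s⁻¹ q^{1/2}` where `qh = q^{1/2}`. -/
noncomputable def qa (qh s : ℂ) : ℂ := s * qh⁻¹ - s⁻¹ * qh

/-- `L_{0,0}(s)`: diagonal with `(k,k)`-entry `a(q^k s)`. -/
noncomputable def L00 (q qh : ℂ) (d : ℕ) (s : ℂ) : Matrix (Fin d) (Fin d) ℂ :=
  Matrix.diagonal fun k => qa qh (q ^ (k : ℕ) * s)

/-- `L_{1,1}(s)`: diagonal with `(k,k)`-entry `a(q^{d-1-k} s)`. -/
noncomputable def L11 (q qh : ℂ) (d : ℕ) (s : ℂ) : Matrix (Fin d) (Fin d) ℂ :=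
  Matrix.diagonal fun k => qa qh (q ^ (d - 1 - (k : ℕ)) * s)

/-- `L_{1,0}`: `(k+1,k)`-entry `q^{k+1} - q^{-(k+1)}` for `0 ≤ k ≤ d-2`. -/
noncomputable def L10 (q : ℂ) (d : ℕ) : Matrix (Fin d) (Fin d) ℂ :=
  Matrix.of fun i j =>
    if (i : ℕ) = (j : ℕ) + 1 then q ^ ((j : ℕ) + 1) - (q ^ ((j : ℕ) + 1))⁻¹ else 0

/-- `L_{0,1}`: `(d-k-2, d-k-1)`-entry `q^{k+1} - q^{-(k+1)}` for `0 ≤ k ≤ d-2`,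
i.e. `(i, i+1)`-entry `q^{d-1-i} - q^{-(d-1-i)}`. -/
noncomputable def L01 (q : ℂ) (d : ℕ) : Matrix (Fin d) (Fin d) ℂ :=
  Matrix.of fun i j =>
    if (j : ℕ) = (i : ℕ) + 1 then q ^ (d - 1 - (i : ℕ)) - (q ^ (d - 1 - (i : ℕ)))⁻¹ else 0

/-- `A(β)(s) = L_{0,0}(s) + β L_{0,1}`. -/
noncomputable def Amat (q qh : ℂ) (d : ℕ) (β s : ℂ) : Matrix (Fin d) (Fin d) ℂ :=
  L00 q qh d s + β • L01 q d

/-- `D(α)(s) = -α L_{0,1} + L_{1,1}(s)`. -/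
noncomputable def Dmat (q qh : ℂ) (d : ℕ) (α s : ℂ) : Matrix (Fin d) (Fin d) ℂ :=
  (-α) • L01 q d + L11 q qh d s

/-- `C(α,β)(s) = -α L_{0,0}(s) + L_{1,0} - αβ L_{0,1} + β L_{1,1}(s)`. -/
noncomputable def Cmat (q qh : ℂ) (d : ℕ) (α β s : ℂ) : Matrix (Fin d) (Fin d) ℂ :=
  (-α) • L00 q qh d s + L10 q d + (-(α * β)) • L01 q d + β • L11 q qh d s

/-!
Both products are diagonal: the `k`-th diagonal entry of `L_{0,1} L_{1,0}` is
`(q^{d-1-k} - q^{-(d-1-k)}) (q^{k+1} - q^{-(k+1)})` (zero for `k = d - 1`), so the claim reduces, entry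
by entry, to the scalar identity `a(x s) a(y s) - (x - x⁻¹)(y - y⁻¹) = a(s) a(x y s)`
with `x = q^{k+1}`, `y = q^{d-1-k}`, `x y = q^d`.
-/

open Matrix

lemma qa_mul_qa_sub_eq (qh s x y : ℂ) (hqh : qh ≠ 0) (hs : s ≠ 0) (hx : x ≠ 0) (hy : y ≠ 0) :
    qa qh (x * s) * qa qh (y * s) - (x - x⁻¹) * (y - y⁻¹) = qa qh s * qa qh (x * y * s) := by
  unfold qa
  field_simp
  ring

lemma superdiagonal_mul_subdiagonal {R : Type*} [NonUnitalNonAssocSemiring R] {d : ℕ}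
    (u v : ℕ → R) :
    (of fun i j : Fin d => if (j : ℕ) = i + 1 then u i else 0) *
        (of fun i j : Fin d => if (i : ℕ) = j + 1 then v j else 0) =
      diagonal fun i : Fin d => if (i : ℕ) + 1 < d then u i * v i else 0 := by
  ext i j
  simp only [mul_apply, of_apply]
  rw [Fin.sum_univ_eq_sum_range
    (fun k => (if k = i + 1 then u i else 0) * if k = j + 1 then v j else 0)]
  simp only [ite_mul, zero_mul, mul_ite, mul_zero, Finset.sum_ite_eq', Finset.mem_range, diagonal_apply]
  by_cases hij : i = j
  · subst hij
    simp
  · have : (j : ℕ) ≠ i := fun h => hij (Fin.ext h.symm)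
    simp [hij, this]

lemma L01_mul_L10 (q : ℂ) (d : ℕ) :
    L01 q d * L10 q d =
      diagonal fun i : Fin d => (q ^ (d - 1 - (i : ℕ)) - (q ^ (d - 1 - (i : ℕ)))⁻¹) *
        (q ^ ((i : ℕ) + 1) - (q ^ ((i : ℕ) + 1))⁻¹) := by
  rw [L01, L10, superdiagonal_mul_subdiagonal
    (fun i => q ^ (d - 1 - i) - (q ^ (d - 1 - i))⁻¹) (fun j => q ^ (j + 1) - (q ^ (j + 1))⁻¹)]
  congr 1
  funext i
  split_ifs with hi
  · rfl
  · rw [show d - 1 - (i : ℕ) = 0 by omega]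
    simp

theorem quantum_determinant_L_general (d : ℕ) (q qh s : ℂ)
    (hq : qh ^ 2 = q) (hq0 : q ≠ 0) (hs : s ≠ 0) :
    L00 q qh d (q * s) * L11 q qh d s - L01 q d * L10 q d
      = (qa qh s * qa qh (q ^ d * s)) • (1 : Matrix (Fin d) (Fin d) ℂ) := by
  have hqh : qh ≠ 0 := by
    rintro rfl
    exact hq0 (by simp [← hq])
  rw [L00, L11, diagonal_mul_diagonal, L01_mul_L10, diagonal_sub, smul_one_eq_diagonal]
  congr 1
  funext i
  have hexp : (i : ℕ) + 1 + (d - 1 - i) = d := by omega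
  rw [← mul_assoc, ← pow_succ, mul_comm (q ^ (d - 1 - (i : ℕ)) - _),
    qa_mul_qa_sub_eq qh s _ _ hqh hs (pow_ne_zero _ hq0) (pow_ne_zero _ hq0), ← pow_add, hexp]

theorem quantum_determinant_L (d : ℕ) (hd : 2 ≤ d) (q qh s : ℂ)
    (hq : qh ^ 2 = q) (hq0 : q ≠ 0) (hs : s ≠ 0) :
    L00 q qh d (q * s) * L11 q qh d s - L01 q d * L10 q d
      = (qa qh s * qa qh (q ^ d * s)) • (1 : Matrix (Fin d) (Fin d) ℂ) :=
  quantum_determinant_L_general d q qh s hq hq0 hs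
end

section
/- The determinant of the tridiagonal d×d matrix C(α,β)(s) equals det(β·I_d − α·Q_z) · ∏_{k=0}^{d−1} a(q^k s), where Q_z = diag(q^{d−1}, q^{d−3}, …, q^{−d+1}); explicitly, det C(α,β)(s) = ∏_{k=0}^{d−1}(β − α q^{d−1−2k}) · ∏_{k=0}^{d−1} a(q^k s). -/
/-!
`C(α,β)(s)` is tridiagonal, with diagonal `-α a(q^k s) + β a(q^{d-1-k} s)`. Its leading principal
minor of size `n` is
`∑_{i+j=n} (-α)^i β^j [n, j]_q ∏_{k<i} a(q^k s) ∏_{k<j} a(q^{d-1-k} s)`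
with symmetric Gaussian binomials `[n, j]_q`: against the three-term recurrence of tridiagonal
determinants this reduces, coefficient by coefficient, to the `q`-Pascal rule, two absorption
identities for `[n, j]_q` and an identity between products of the form `(z - z⁻¹)(w - w⁻¹)`.
For `n = d` the two products merge into `∏_{k<d} a(q^k s)` for every `(i, j)`, and what is left is
the `q`-binomial theorem `∑_{i+j=d} (-α)^i β^j [d, j]_q = ∏_{k<d} (β - α q^{d-1-2k})`.
-/

open Finset

section Tridiagonal

variable {R : Type*} [CommRing R]

theorem Finset.Nat.sum_antidiagonal_add_two_of_recurrence {t : ℕ → ℕ → R} {x y z : ℕ → R}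
    (hrec : ∀ i j, t (i + 1) (j + 1) = x (i + j) * t i (j + 1) + y (i + j) * t (i + 1) j
      + z (i + j) * t i j)
    (hleft : ∀ n, t (n + 2) 0 = x n * t (n + 1) 0) (hright : ∀ n, t 0 (n + 2) = y n * t 0 (n + 1))
    (n : ℕ) :
    ∑ p ∈ antidiagonal (n + 2), t p.1 p.2
      = (x n + y n) * ∑ p ∈ antidiagonal (n + 1), t p.1 p.2
        + z n * ∑ p ∈ antidiagonal n, t p.1 p.2 := by
  have hinner : ∑ p ∈ antidiagonal n, t (p.1 + 1) (p.2 + 1)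
      = x n * ∑ p ∈ antidiagonal n, t p.1 (p.2 + 1) + y n * ∑ p ∈ antidiagonal n, t (p.1 + 1) p.2
        + z n * ∑ p ∈ antidiagonal n, t p.1 p.2 := by
    simp only [mul_sum, ← sum_add_distrib]
    refine sum_congr rfl fun p hp => ?_
    rw [hrec, mem_antidiagonal.mp hp]
  have hsplit : ∑ p ∈ antidiagonal (n + 2), t p.1 p.2
      = t 0 (n + 2) + t (n + 2) 0 + ∑ p ∈ antidiagonal n, t (p.1 + 1) (p.2 + 1) := by
    rw [Nat.sum_antidiagonal_succ, Nat.sum_antidiagonal_succ']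
    ring
  have hfirst := Nat.sum_antidiagonal_succ (f := fun p => t p.1 p.2) (n := n)
  have hlast := Nat.sum_antidiagonal_succ' (f := fun p => t p.1 p.2) (n := n)
  rw [hsplit, hinner, hleft, hright]
  linear_combination -x n * hlast - y n * hfirst

namespace Matrix

def tridiagonal (c l u : ℕ → R) (n : ℕ) : Matrix (Fin n) (Fin n) R :=
  of fun i j =>
    if (i : ℕ) = j then c i else if (i : ℕ) = j + 1 then l j else if (j : ℕ) = i + 1 then u i else 0

variable (c l u : ℕ → R)

theorem tridiagonal_submatrix_castSucc (n : ℕ) :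
    (tridiagonal c l u (n + 1)).submatrix Fin.castSucc Fin.castSucc = tridiagonal c l u n :=
  rfl

theorem tridiagonal_apply_eq_zero {n : ℕ} {i j : Fin n} (h : (i : ℕ) + 1 < j ∨ (j : ℕ) + 1 < i) :
    tridiagonal c l u n i j = 0 := by
  rw [tridiagonal, of_apply, if_neg (by omega), if_neg (by omega), if_neg (by omega)]

theorem det_tridiagonal_add_two (n : ℕ) :
    (tridiagonal c l u (n + 2)).det
      = c (n + 1) * (tridiagonal c l u (n + 1)).det - l n * u n * (tridiagonal c l u n).det := by
  set T := tridiagonal c l u (n + 2)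
  have hlast : (Fin.last n).castSucc.succAbove (Fin.last n) = Fin.last (n + 1) := by
    ext; simp [Fin.succAbove]
  have hcast : (Fin.last n).castSucc.succAbove ∘ Fin.castSucc = Fin.castSucc ∘ Fin.castSucc := by
    funext j; ext; simp [Fin.succAbove, Fin.lt_def, j.isLt]
  have hminor : (T.submatrix Fin.castSucc (Fin.last n).castSucc.succAbove).det
      = u n * (tridiagonal c l u n).det := by
    rw [det_succ_column _ (Fin.last n), Fin.sum_univ_castSucc, Finset.sum_eq_zero]
    · have hu : T (Fin.last n).castSucc (Fin.last (n + 1)) = u n := by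
        simp [T, tridiagonal, show n ≠ n + 1 + 1 by omega]
      have hT : T.submatrix (Fin.castSucc ∘ Fin.castSucc) (Fin.castSucc ∘ Fin.castSucc)
          = tridiagonal c l u n := rfl
      simp only [submatrix_apply, Fin.succAbove_last, submatrix_submatrix, hlast, hu, hcast]
      rw [Fin.val_last, Even.neg_one_pow ⟨n, rfl⟩, hT]
      ring
    · intro i _
      have h0 : T i.castSucc.castSucc (Fin.last (n + 1)) = 0 :=
        tridiagonal_apply_eq_zero c l u (by simp)
      simp only [submatrix_apply, hlast, h0, mul_zero, zero_mul]
  rw [det_succ_row T (Fin.last (n + 1)), Fin.sum_univ_castSucc, Fin.sum_univ_castSucc,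
    Finset.sum_eq_zero, Fin.succAbove_last, tridiagonal_submatrix_castSucc, hminor]
  · have hc : T (Fin.last (n + 1)) (Fin.last (n + 1)) = c (n + 1) := by simp [T, tridiagonal]
    have hl : T (Fin.last (n + 1)) (Fin.last n).castSucc = l n := by simp [T, tridiagonal]
    simp only [hc, hl, Fin.val_last, Fin.val_castSucc]
    rw [Odd.neg_one_pow ⟨n, by ring⟩, Even.neg_one_pow ⟨n + 1, rfl⟩]
    ring
  · intro j _
    have h0 : T (Fin.last (n + 1)) j.castSucc.castSucc = 0 :=
      tridiagonal_apply_eq_zero c l u (by simp)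
    rw [h0, mul_zero, zero_mul]

variable {c l u}

theorem det_tridiagonal_eq_sum_antidiagonal {t : ℕ → ℕ → R} {x y : ℕ → R}
    (h00 : t 0 0 = 1) (h1 : t 1 0 + t 0 1 = c 0)
    (hrec : ∀ i j, t (i + 1) (j + 1) = x (i + j) * t i (j + 1) + y (i + j) * t (i + 1) j
      - l (i + j) * u (i + j) * t i j)
    (hleft : ∀ n, t (n + 2) 0 = x n * t (n + 1) 0) (hright : ∀ n, t 0 (n + 2) = y n * t 0 (n + 1))
    (hdiag : ∀ n, x n + y n = c (n + 1)) :
    ∀ n, (tridiagonal c l u n).det = ∑ p ∈ antidiagonal n, t p.1 p.2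
  | 0 => by simp [h00]
  | 1 => by
    rw [det_fin_one, Finset.Nat.sum_antidiagonal_succ]
    simp [tridiagonal, ← h1, add_comm]
  | n + 2 => by
    rw [det_tridiagonal_add_two,
      Finset.Nat.sum_antidiagonal_add_two_of_recurrence (z := fun n => -(l n * u n))
        (fun i j => by rw [hrec]; ring) hleft hright, hdiag,
      det_tridiagonal_eq_sum_antidiagonal h00 h1 hrec hleft hright hdiag n,
      det_tridiagonal_eq_sum_antidiagonal h00 h1 hrec hleft hright hdiag (n + 1)]
    ring

end Matrix

end Tridiagonal

variable {K : Type*} [Field K]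

/-- With `w = s q^{-1/2}`, `a(q^k s) = subInv (w q^k)`; the off-diagonal entries of `C(α,β)(s)` are
multiples of `subInv (q^k)`. -/
def subInv (z : K) : K := z - z⁻¹

/-- The symmetric Gaussian binomial coefficient, `qBinom q n j = q^{-j(n-j)} [n choose j]_{q²}`. -/
def qBinom (q : K) : ℕ → ℕ → K
  | _, 0 => 1
  | 0, _ + 1 => 0
  | n + 1, j + 1 => q ^ (j + 1) * qBinom q n (j + 1) + q ^ j / q ^ n * qBinom q n j

namespace qBinom

variable {q : K}

@[simp] theorem zero_right (q : K) (n : ℕ) : qBinom q n 0 = 1 := by cases n <;> rfl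

theorem succ_succ (q : K) (n j : ℕ) :
    qBinom q (n + 1) (j + 1) = q ^ (j + 1) * qBinom q n (j + 1) + q ^ j / q ^ n * qBinom q n j :=
  rfl

theorem eq_zero_of_lt (q : K) : ∀ {n j : ℕ}, n < j → qBinom q n j = 0
  | 0, _ + 1, _ => rfl
  | n + 1, j + 1, h => by
    rw [succ_succ, eq_zero_of_lt q (by omega : n < j + 1), eq_zero_of_lt q (by omega : n < j)]
    ring

theorem self (hq : q ≠ 0) : ∀ n, qBinom q n n = 1
  | 0 => rfl
  | n + 1 => by
    rw [succ_succ, eq_zero_of_lt q n.lt_succ_self, self hq n]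
    simp [hq]

theorem subInv_mul_succ_right (hq : q ≠ 0) : ∀ n j,
    subInv (q ^ (j + 1)) * qBinom q n (j + 1) = subInv (q ^ n / q ^ j) * qBinom q n j
  | 0, 0 => by simp [subInv, qBinom]
  | 0, j + 1 => by simp [qBinom]
  | n + 1, 0 => by
    have ih := subInv_mul_succ_right hq n 0
    simp only [zero_right, succ_succ, subInv] at ih ⊢
    linear_combination (norm := skip) q * ih
    field_simp
    ring
  | n + 1, j + 1 => by
    have ih₁ := subInv_mul_succ_right hq n (j + 1)
    have ih₀ := subInv_mul_succ_right hq n j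
    simp only [succ_succ, subInv] at ih₀ ih₁ ⊢
    linear_combination (norm := skip) q ^ (j + 2) * ih₁ + q ^ j / q ^ n * ih₀
    field_simp
    ring

theorem subInv_mul_succ_left (hq : q ≠ 0) (n j : ℕ) :
    subInv (q ^ (n + 1) / q ^ j) * qBinom q (n + 1) j = subInv (q ^ (n + 1)) * qBinom q n j := by
  cases j with
  | zero => simp
  | succ k =>
    have h := subInv_mul_succ_right hq n k
    simp only [succ_succ, subInv] at h ⊢
    linear_combination (norm := skip) -(q ^ k / q ^ n) * h
    field_simp
    ring

theorem sum_antidiagonal_eq_prod (hq : q ≠ 0) (α β : K) (n : ℕ) :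
    ∑ p ∈ antidiagonal n, (-α) ^ p.1 * β ^ p.2 * qBinom q n p.2
      = ∏ k ∈ range n, (β - α * q ^ ((n : ℤ) - 1 - 2 * k)) := by
  induction n generalizing α with
  | zero => simp
  | succ n ih =>
    have hsum : ∑ p ∈ antidiagonal (n + 1), (-α) ^ p.1 * β ^ p.2 * qBinom q (n + 1) p.2
        = (β - α * q ^ n) * ∑ p ∈ antidiagonal n, (-(α / q)) ^ p.1 * β ^ p.2 * qBinom q n p.2 := by
      set g : ℕ × ℕ → K := fun p => (-α) ^ p.1 * β ^ p.2 * q ^ p.2 * qBinom q n p.2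
      set Φ := ∑ p ∈ antidiagonal n, (-(α / q)) ^ p.1 * β ^ p.2 * qBinom q n p.2
      have hscale : ∀ p ∈ antidiagonal n, (-α) ^ p.1 * q ^ p.2 / q ^ n = (-(α / q)) ^ p.1 := by
        intro p hp
        rw [← mem_antidiagonal.mp hp, pow_add, ← neg_div, div_pow]
        field_simp
      have hsplit : ∑ p ∈ antidiagonal (n + 1), (-α) ^ p.1 * β ^ p.2 * qBinom q (n + 1) p.2
          = g (n + 1, 0) + ∑ p ∈ antidiagonal n, g (p.1, p.2 + 1) + β * Φ := by
        rw [Nat.sum_antidiagonal_succ', mul_sum, add_assoc, ← sum_add_distrib]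
        congr 1
        · simp [g]
        · refine sum_congr rfl fun p hp => ?_
          rw [succ_succ, ← hscale p hp]
          simp only [g]
          field_simp
          ring
      have hlower : ∑ p ∈ antidiagonal n, g (p.1 + 1, p.2) = -(α * q ^ n) * Φ := by
        rw [mul_sum]
        refine sum_congr rfl fun p hp => ?_
        rw [← hscale p hp]
        simp only [g]
        field_simp
        ring
      rw [hsplit, ← Nat.sum_antidiagonal_succ', Nat.sum_antidiagonal_succ, hlower]
      simp [g, eq_zero_of_lt q (n.lt_succ_self)]
      ring
    have hprod : ∏ k ∈ range (n + 1), (β - α * q ^ (((n + 1 : ℕ) : ℤ) - 1 - 2 * k))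
        = (β - α * q ^ n) * ∏ k ∈ range n, (β - α / q * q ^ ((n : ℤ) - 1 - 2 * k)) := by
      rw [prod_range_succ', mul_comm]
      congr 1
      · simp
      · refine prod_congr rfl fun k _ => ?_
        rw [div_mul_eq_mul_div, mul_div_assoc, div_eq_mul_inv, ← zpow_sub_one₀ hq]
        push_cast
        ring_nf
    rw [hsum, hprod, ih]

end qBinom

theorem subInv_mul_subInv_sub_subInv_mul_subInv {x y z : K} (hx : x ≠ 0) (hy : y ≠ 0) (hz : z ≠ 0) :
    subInv y * subInv z - subInv (x * y) * subInv (z / x) = subInv x * subInv (x * y / z) := by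
  simp only [subInv]
  field_simp
  ring

theorem qBinom.add_two_mul_subInv_mul_subInv {q w : K} (hq : q ≠ 0) (hw : w ≠ 0) (m i j : ℕ) :
    qBinom q (i + j + 2) (j + 1) * subInv (w * q ^ i) * subInv (w * q ^ m / q ^ j)
      = subInv (w * q ^ (i + j + 1)) * subInv (w * q ^ m / q ^ j) * qBinom q (i + j + 1) (j + 1)
        + subInv (w * q ^ m / q ^ (i + j + 1)) * subInv (w * q ^ i) * qBinom q (i + j + 1) j
        - subInv (q ^ (i + j + 1)) * subInv (q ^ m / q ^ (i + j)) * qBinom q (i + j) j := by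
  have hA1 := qBinom.subInv_mul_succ_right hq (i + j + 1) j
  have hA2 := qBinom.subInv_mul_succ_left hq (i + j) j
  have hF := subInv_mul_subInv_sub_subInv_mul_subInv (x := q ^ (i + 1)) (y := w / q)
    (z := w * q ^ m / q ^ j) (by simp [hq]) (by simp [hq, hw]) (by simp [hq, hw])
  rw [qBinom.succ_succ]
  linear_combination (norm := skip)
    -(w * q ^ i)⁻¹ * subInv (w * q ^ m / q ^ j) * hA1 + qBinom q (i + j + 1) j * hF
      - subInv (q ^ m / q ^ (i + j)) * hA2
  simp only [subInv]
  field_simp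
  ring

/-- `w * q ^ m / q ^ k` plays the role of `w q^{m-k}`, avoiding truncated subtraction; the matrix
is `C(α,β)(s)` when `n = m + 1`. -/
theorem det_tridiagonal_eq_sum_qBinom {q w : K} (hq : q ≠ 0) (hw : w ≠ 0) (α β : K) (m n : ℕ) :
    (Matrix.tridiagonal (fun k => -α * subInv (w * q ^ k) + β * subInv (w * q ^ m / q ^ k))
      (fun k => subInv (q ^ (k + 1))) (fun k => -(α * β) * subInv (q ^ m / q ^ k)) n).det
      = ∑ p ∈ antidiagonal n, (-α) ^ p.1 * β ^ p.2 * qBinom q n p.2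
          * (∏ k ∈ range p.1, subInv (w * q ^ k))
          * ∏ k ∈ range p.2, subInv (w * q ^ m / q ^ k) := by
  rw [Matrix.det_tridiagonal_eq_sum_antidiagonal
    (t := fun i j => (-α) ^ i * β ^ j * qBinom q (i + j) j
      * (∏ k ∈ range i, subInv (w * q ^ k)) * ∏ k ∈ range j, subInv (w * q ^ m / q ^ k))
    (x := fun n => -α * subInv (w * q ^ (n + 1)))
    (y := fun n => β * subInv (w * q ^ m / q ^ (n + 1)))
    _ _ _ _ _ (fun _ => rfl)]
  · exact sum_congr rfl fun p hp => by rw [mem_antidiagonal.mp hp]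
  · simp
  · simp [qBinom.self hq]
  · intro i j
    have h := qBinom.add_two_mul_subInv_mul_subInv hq hw m i j
    simp only [prod_range_succ]
    rw [show i + 1 + (j + 1) = i + j + 2 by ring, show i + (j + 1) = i + j + 1 by ring,
      show i + 1 + j = i + j + 1 by ring]
    linear_combination (-α) ^ (i + 1) * β ^ (j + 1) * (∏ k ∈ range i, subInv (w * q ^ k))
      * (∏ k ∈ range j, subInv (w * q ^ m / q ^ k)) * h
  · intro n
    simp [prod_range_succ]
    ring
  · intro n
    simp [prod_range_succ, qBinom.self hq]
    ring

theorem Finset.prod_range_mul_prod_range_sub {M : Type*} [CommMonoid M] (f : ℕ → M) {i j m : ℕ}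
    (h : i + j = m + 1) :
    (∏ k ∈ range i, f k) * ∏ k ∈ range j, f (m - k) = ∏ k ∈ range (m + 1), f k := by
  rw [← h, prod_range_add, ← prod_range_reflect (fun k => f (i + k)) j]
  refine congrArg _ (prod_congr rfl fun k hk => ?_)
  have := mem_range.mp hk
  congr 1
  omega

theorem qa_eq_subInv (qh z : ℂ) : qa qh z = subInv (z * qh⁻¹) := by
  rw [qa, subInv, mul_inv, inv_inv]

theorem Cmat_eq_tridiagonal {q : ℂ} (hq : q ≠ 0) (qh α β s : ℂ) (m : ℕ) :
    Cmat q qh (m + 1) α β s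
      = Matrix.tridiagonal
          (fun k => -α * subInv (s * qh⁻¹ * q ^ k) + β * subInv (s * qh⁻¹ * q ^ m / q ^ k))
          (fun k => subInv (q ^ (k + 1))) (fun k => -(α * β) * subInv (q ^ m / q ^ k)) (m + 1) := by
  have hpow : ∀ k ≤ m, q ^ (m - k) = q ^ m / q ^ k := fun k hk => by
    rw [pow_sub₀ q hq hk, div_eq_mul_inv]
  ext i j
  have hi := i.isLt
  simp only [Cmat, L00, L11, L10, L01, Matrix.tridiagonal, Matrix.add_apply, Matrix.smul_apply,
    Matrix.diagonal_apply, Matrix.of_apply, smul_eq_mul, Fin.ext_iff, qa_eq_subInv,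
    Nat.add_sub_cancel, hpow i (by omega), subInv]
  split_ifs <;> first | omega | ring

theorem det_Cmat_general (d : ℕ) (q qh : ℂ) (hq : qh ^ 2 = q) (hq0 : q ≠ 0)
    (α β : ℂ) (s : ℂ) (hs : s ≠ 0) :
    (Cmat q qh d α β s).det
      = (∏ k ∈ Finset.range d, (β - α * q ^ ((d : ℤ) - 1 - 2 * (k : ℤ))))
        * ∏ k ∈ Finset.range d, qa qh (q ^ k * s) := by
  have hqh : qh ≠ 0 := by
    rintro rfl
    exact hq0 (by rw [← hq]; ring)
  have hw : s * qh⁻¹ ≠ 0 := mul_ne_zero hs (inv_ne_zero hqh)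
  rcases d with _ | m
  · simp
  rw [Cmat_eq_tridiagonal hq0, det_tridiagonal_eq_sum_qBinom hq0 hw,
    ← qBinom.sum_antidiagonal_eq_prod hq0, sum_mul]
  refine sum_congr rfl fun p hp => ?_
  have hb : ∏ k ∈ range p.2, subInv (s * qh⁻¹ * q ^ m / q ^ k)
      = ∏ k ∈ range p.2, subInv (s * qh⁻¹ * q ^ (m - k)) := by
    refine prod_congr rfl fun k hk => ?_
    have := mem_antidiagonal.mp hp
    rw [pow_sub₀ q hq0 (by have := mem_range.mp hk; omega), mul_div_assoc, div_eq_mul_inv]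
  rw [mul_assoc, hb, prod_range_mul_prod_range_sub (fun k => subInv (s * qh⁻¹ * q ^ k))
    (mem_antidiagonal.mp hp)]
  congr 1
  refine prod_congr rfl fun k _ => ?_
  rw [qa_eq_subInv]
  congr 1
  ring

theorem det_Cmat (d : ℕ) (hd : 2 ≤ d) (q qh : ℂ) (hq : qh ^ 2 = q) (hq0 : q ≠ 0)
    (α β : ℂ) (hα : α ≠ 0) (hβ : β ≠ 0) (s : ℂ) (hs : s ≠ 0) :
    (Cmat q qh d α β s).det
      = (∏ k ∈ Finset.range d, (β - α * q ^ ((d : ℤ) - 1 - 2 * (k : ℤ))))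
        * ∏ k ∈ Finset.range d, qa qh (q ^ k * s) :=
  det_Cmat_general d q qh hq hq0 α β s hs
end

section
/- Let N be an odd positive integer, p ∈ ℂ a primitive N-th root of unity, q = p², and 2 ≤ d ≤ N. For σ ∈ ℂ* and n ∈ ℤ define G(σ | n) = ∑_{r=0}^{d−1} p^{(n+1)(d−1)(2r−d+1)} σ^{2r−d+1} [d−1 choose r]_q. Then G(σ | n) = G(σ^{−1} | n') whenever n + n' + 2 ≡ 0 (mod N). -/
/-!
Reflecting the summation index `r ↦ d - 1 - r` negates the exponent `2r - d + 1`, and the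
`q`-binomial coefficients are symmetric, so `G(σ⁻¹ | n) = G(σ | -n - 2)` for every `p`.
Since `p ^ N = 1`, `G(σ | n)` only depends on `n` modulo `N`, and `n ≡ -n' - 2 [ZMOD N]`.
-/

noncomputable def qint (q : ℂ) (m : ℕ) : ℂ := (q ^ m - (q ^ m)⁻¹) / (q - q⁻¹)

noncomputable def qfact (q : ℂ) (m : ℕ) : ℂ := ∏ i ∈ Finset.range m, qint q (i + 1)

noncomputable def qbinom (q : ℂ) (m n : ℕ) : ℂ := qfact q m / (qfact q (m - n) * qfact q n)

/-- `G(σ | n) = ∑_{r=0}^{d-1} p^{(n+1)(d-1)(2r-d+1)} σ^{2r-d+1} [d-1 choose r]_q`. -/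
noncomputable def Gfun (p q σ : ℂ) (d : ℕ) (n : ℤ) : ℂ :=
  ∑ r ∈ Finset.range d,
    p ^ ((n + 1) * ((d : ℤ) - 1) * (2 * (r : ℤ) - (d : ℤ) + 1))
      * σ ^ (2 * (r : ℤ) - (d : ℤ) + 1) * qbinom q (d - 1) r

lemma qbinom_symm (q : ℂ) {m r : ℕ} (hr : r ≤ m) : qbinom q m (m - r) = qbinom q m r := by
  rw [qbinom, qbinom, Nat.sub_sub_self hr, mul_comm]

lemma zpow_eq_zpow_of_modEq {G₀ : Type*} [GroupWithZero G₀] {x : G₀} {N : ℕ} (hx : x ^ N = 1)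
    {a b : ℤ} (hab : a ≡ b [ZMOD N]) : x ^ a = x ^ b := by
  obtain ⟨k, hk⟩ := Int.modEq_iff_dvd.mp hab
  rcases N.eq_zero_or_pos with rfl | hN
  · simp_all
  have hx0 : x ≠ 0 := by
    rintro rfl
    exact zero_ne_one ((zero_pow hN.ne').symm.trans hx)
  rw [show b = a + N * k by omega, zpow_add₀ hx0, zpow_mul, zpow_natCast, hx, one_zpow, mul_one]

lemma Gfun_inv (p q σ : ℂ) (d : ℕ) (n : ℤ) : Gfun p q σ⁻¹ d n = Gfun p q σ d (-n - 2) := by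
  rw [Gfun, ← Finset.sum_range_reflect]
  refine Finset.sum_congr rfl fun r hr => ?_
  have hrd : r < d := Finset.mem_range.mp hr
  have hexp : 2 * ((d - 1 - r : ℕ) : ℤ) - d + 1 = -(2 * (r : ℤ) - d + 1) := by omega
  rw [hexp, qbinom_symm q (by omega), inv_zpow', neg_neg]
  congr 3
  ring

lemma Gfun_congr_of_modEq {N : ℕ} {p : ℂ} (hp : p ^ N = 1) (q σ : ℂ) (d : ℕ) {n m : ℤ}
    (hnm : n ≡ m [ZMOD N]) : Gfun p q σ d n = Gfun p q σ d m := by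
  refine Finset.sum_congr rfl fun r _ => ?_
  rw [zpow_eq_zpow_of_modEq hp (((hnm.add_right 1).mul_right _).mul_right _)]

theorem Gfun_inversion_general (N : ℕ) (p : ℂ)
    (hp : IsPrimitiveRoot p N) (q : ℂ) (d : ℕ)
    (σ : ℂ) (n n' : ℤ) (hnn : (N : ℤ) ∣ n + n' + 2) :
    Gfun p q σ d n = Gfun p q σ⁻¹ d n' := by
  rw [Gfun_inv]
  refine Gfun_congr_of_modEq hp.pow_eq_one q σ d (Int.modEq_iff_dvd.mpr ?_)
  rwa [show -n' - 2 - n = -(n + n' + 2) by ring, dvd_neg]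

theorem Gfun_inversion (N : ℕ) (hN : Odd N) (hN0 : 0 < N) (p : ℂ)
    (hp : IsPrimitiveRoot p N) (q : ℂ) (hq : q = p ^ 2) (d : ℕ) (hd : 2 ≤ d) (hdN : d ≤ N)
    (σ : ℂ) (hσ : σ ≠ 0) (n n' : ℤ) (hnn : (N : ℤ) ∣ n + n' + 2) :
    Gfun p q σ d n = Gfun p q σ⁻¹ d n' :=
  Gfun_inversion_general N p hp q d σ n n' hnn
end

section
/- Let L be a positive even integer, d ≥ 2, q ∈ ℂ* with q^{2m} ≠ 1 for 1 ≤ m ≤ d−1, and z ∈ ℂ. Let σ, σ̃ ∈ {±1}^L satisfy ∑_{ℓ=1}^L σ_ℓ = ∑_{ℓ=1}^L σ̃_ℓ = 0. Define Φ(s', s) = ∏_{ℓ=1}^L ( ∑_{k=0}^{d−1} z^k [d−1 choose k]_q · q^{k(d−1)(∑_{i=1}^{ℓ} σ_i − ∑_{i=1}^{ℓ−1} σ̃_i)} · (s')^{σ̃_ℓ k} · s^{σ_ℓ k} ) for s, s' ∈ ℂ*. Then Φ(s', s) = Φ(s, s'). -/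
/-- The scalar product function `Φ(s', s)` of the `Q_L Q_R` commutation argument. -/
noncomputable def Phi (q z : ℂ) (d L : ℕ) (σ σt : ℕ → ℤ) (s' s : ℂ) : ℂ :=
  ∏ ℓ ∈ Finset.range L,
    ∑ k ∈ Finset.range d,
      z ^ k * qbinom q (d - 1) k
        * q ^ ((k : ℤ) * ((d : ℤ) - 1)
            * ((∑ i ∈ Finset.range (ℓ + 1), σ i) - ∑ i ∈ Finset.range ℓ, σt i))
        * s' ^ (σt ℓ * (k : ℤ)) * s ^ (σ ℓ * (k : ℤ))

/-! The exponent `t_ℓ = ∑_{i≤ℓ} σ_i - ∑_{i<ℓ} σ̃_i` equals `w_ℓ + σ_ℓ`, where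
`w_ℓ = ∑_{i<ℓ} (σ_i - σ̃_i)` is a closed walk with steps in `{-2, 0, 2}` starting at `0`.
The `ℓ`-th factor of `Φ(s', s)` depends only on `(t_ℓ, σ̃_ℓ, σ_ℓ)`, and swapping `s, s'` swaps
the last two entries. This changes nothing when `σ_ℓ = σ̃_ℓ`; the steps with
`(σ_ℓ, σ̃_ℓ) = (1, -1)` and `t_ℓ = t` are the up-crossings of the odd level `t` by the walk,
those with `(-1, 1)` its down-crossings, and a closed walk crosses every level equally often in
both directions. So the multiset of triples is invariant under the swap. -/

open Finset

theorem card_filter_upcrossing_eq_downcrossing (p : ℕ → ℤ) (L : ℕ) (hp : p L = p 0) (x : ℤ) :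
    #{ℓ ∈ range L | p ℓ < x ∧ x ≤ p (ℓ + 1)} = #{ℓ ∈ range L | p (ℓ + 1) < x ∧ x ≤ p ℓ} := by
  have htelescope : ∑ ℓ ∈ range L,
      ((if x ≤ p (ℓ + 1) then 1 else 0) - (if x ≤ p ℓ then 1 else 0) : ℤ) = 0 := by
    rw [sum_range_sub (fun ℓ => if x ≤ p ℓ then (1 : ℤ) else 0), hp, sub_self]
  have hstep : ∀ ℓ, ((if x ≤ p (ℓ + 1) then 1 else 0) - (if x ≤ p ℓ then 1 else 0) : ℤ) =
      (if p ℓ < x ∧ x ≤ p (ℓ + 1) then 1 else 0) - (if p (ℓ + 1) < x ∧ x ≤ p ℓ then 1 else 0) := by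
    intro ℓ
    split_ifs <;> omega
  simp only [hstep, sum_sub_distrib, sum_boole, sub_eq_zero] at htelescope
  exact_mod_cast htelescope

def walk (σ σt : ℕ → ℤ) (ℓ : ℕ) : ℤ := ∑ i ∈ range ℓ, (σ i - σt i)

section Walk

variable {L : ℕ} {σ σt : ℕ → ℤ}

theorem walk_succ (ℓ : ℕ) : walk σ σt (ℓ + 1) = walk σ σt ℓ + (σ ℓ - σt ℓ) :=
  sum_range_succ _ _

theorem sum_range_succ_sub_sum_range (ℓ : ℕ) :
    (∑ i ∈ range (ℓ + 1), σ i) - ∑ i ∈ range ℓ, σt i = walk σ σt ℓ + σ ℓ := by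
  rw [walk, sum_range_succ, sum_sub_distrib]
  ring

theorem walk_eq_zero_of_sum_eq_zero (hσ0 : ∑ ℓ ∈ range L, σ ℓ = 0)
    (hσt0 : ∑ ℓ ∈ range L, σt ℓ = 0) : walk σ σt L = 0 := by
  rw [walk, sum_sub_distrib, hσ0, hσt0, sub_zero]

theorem walk_emod_two (hσ : ∀ ℓ < L, σ ℓ = 1 ∨ σ ℓ = -1) (hσt : ∀ ℓ < L, σt ℓ = 1 ∨ σt ℓ = -1) :
    ∀ ℓ ≤ L, walk σ σt ℓ % 2 = 0
  | 0, _ => rfl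
  | ℓ + 1, hℓ => by
    have := walk_emod_two hσ hσt ℓ (by omega)
    rw [walk_succ]
    rcases hσ ℓ hℓ with h | h <;> rcases hσt ℓ hℓ with h' | h' <;> omega

theorem card_level_up_eq_down (hσ : ∀ ℓ < L, σ ℓ = 1 ∨ σ ℓ = -1)
    (hσt : ∀ ℓ < L, σt ℓ = 1 ∨ σt ℓ = -1) (hσ0 : ∑ ℓ ∈ range L, σ ℓ = 0)
    (hσt0 : ∑ ℓ ∈ range L, σt ℓ = 0) (t : ℤ) :
    #{ℓ ∈ range L | t = walk σ σt ℓ + σ ℓ ∧ -1 = σt ℓ ∧ 1 = σ ℓ} =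
      #{ℓ ∈ range L | t = walk σ σt ℓ + σ ℓ ∧ 1 = σt ℓ ∧ -1 = σ ℓ} := by
  have hlocal : ∀ ℓ ∈ range L, walk σ σt ℓ % 2 = 0 ∧ (σ ℓ = 1 ∨ σ ℓ = -1) ∧
      (σt ℓ = 1 ∨ σt ℓ = -1) ∧ walk σ σt (ℓ + 1) = walk σ σt ℓ + (σ ℓ - σt ℓ) := by
    intro ℓ hℓ
    have hℓ := mem_range.1 hℓ
    exact ⟨walk_emod_two hσ hσt ℓ hℓ.le, hσ ℓ hℓ, hσt ℓ hℓ, walk_succ ℓ⟩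
  -- the walk stays even, so only odd `t` occur, and for those the two sets are the crossings of `t`
  rcases Int.emod_two_eq_zero_or_one t with ht | ht
  · rw [card_eq_zero.2, card_eq_zero.2] <;>
      refine filter_eq_empty_iff.2 fun ℓ hℓ => ?_ <;> have := hlocal ℓ hℓ <;> omega
  · have hwalk : walk σ σt L = walk σ σt 0 := by
      rw [walk_eq_zero_of_sum_eq_zero hσ0 hσt0]; rfl
    convert card_filter_upcrossing_eq_downcrossing (walk σ σt) L hwalk t using 2 <;>
      refine filter_congr fun ℓ hℓ => ?_ <;> have := hlocal ℓ hℓ <;> omega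

theorem card_level_comm (hσ : ∀ ℓ < L, σ ℓ = 1 ∨ σ ℓ = -1)
    (hσt : ∀ ℓ < L, σt ℓ = 1 ∨ σt ℓ = -1) (hσ0 : ∑ ℓ ∈ range L, σ ℓ = 0)
    (hσt0 : ∑ ℓ ∈ range L, σt ℓ = 0) (t a b : ℤ) :
    #{ℓ ∈ range L | t = walk σ σt ℓ + σ ℓ ∧ a = σt ℓ ∧ b = σ ℓ} =
      #{ℓ ∈ range L | t = walk σ σt ℓ + σ ℓ ∧ b = σt ℓ ∧ a = σ ℓ} := by
  by_cases hab : a = b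
  · rw [hab]
  by_cases hup : a = -1 ∧ b = 1
  · rw [hup.1, hup.2]
    exact card_level_up_eq_down hσ hσt hσ0 hσt0 t
  by_cases hdown : a = 1 ∧ b = -1
  · rw [hdown.1, hdown.2]
    exact (card_level_up_eq_down hσ hσt hσ0 hσt0 t).symm
  have hempty : ∀ a' b' : ℤ, a' ≠ b' → ¬(a' = -1 ∧ b' = 1) → ¬(a' = 1 ∧ b' = -1) →
      #{ℓ ∈ range L | t = walk σ σt ℓ + σ ℓ ∧ a' = σt ℓ ∧ b' = σ ℓ} = 0 := by
    refine fun a' b' h₁ h₂ h₃ => card_eq_zero.2 (filter_eq_empty_iff.2 fun ℓ hℓ => ?_)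
    have hℓ := mem_range.1 hℓ
    rcases hσ ℓ hℓ with h | h <;> rcases hσt ℓ hℓ with h' | h' <;> omega
  rw [hempty a b hab hup hdown, hempty b a (Ne.symm hab) (by omega) (by omega)]

theorem map_level_swap (hσ : ∀ ℓ < L, σ ℓ = 1 ∨ σ ℓ = -1)
    (hσt : ∀ ℓ < L, σt ℓ = 1 ∨ σt ℓ = -1) (hσ0 : ∑ ℓ ∈ range L, σ ℓ = 0)
    (hσt0 : ∑ ℓ ∈ range L, σt ℓ = 0) :
    (range L).val.map (fun ℓ => (walk σ σt ℓ + σ ℓ, σt ℓ, σ ℓ)) =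
      (range L).val.map (fun ℓ => (walk σ σt ℓ + σ ℓ, σ ℓ, σt ℓ)) := by
  ext ⟨t, a, b⟩
  simp only [Multiset.count_map, ← filter_val, card_val, Prod.mk.injEq]
  rw [card_level_comm hσ hσt hσ0 hσt0]
  exact congrArg card (filter_congr fun ℓ _ => and_congr_right fun _ => and_comm)

end Walk

theorem Phi_symmetric_general (L : ℕ) (d : ℕ) (q : ℂ) (z : ℂ) (σ σt : ℕ → ℤ)
    (hσ : ∀ ℓ < L, σ ℓ = 1 ∨ σ ℓ = -1) (hσt : ∀ ℓ < L, σt ℓ = 1 ∨ σt ℓ = -1)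
    (hσ0 : ∑ ℓ ∈ Finset.range L, σ ℓ = 0) (hσt0 : ∑ ℓ ∈ Finset.range L, σt ℓ = 0)
    (s s' : ℂ) :
    Phi q z d L σ σt s' s = Phi q z d L σ σt s s' := by
  set F : ℂ → ℂ → ℤ × ℤ × ℤ → ℂ := fun x y v => ∑ k ∈ range d, z ^ k * qbinom q (d - 1) k *
    q ^ ((k : ℤ) * ((d : ℤ) - 1) * v.1) * x ^ (v.2.1 * (k : ℤ)) * y ^ (v.2.2 * (k : ℤ))
  have hPhi : ∀ x y, Phi q z d L σ σt x y =
      (((range L).val.map fun ℓ => (walk σ σt ℓ + σ ℓ, σt ℓ, σ ℓ)).map (F x y)).prod := by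
    intro x y
    simp only [Phi, Multiset.map_map, sum_range_succ_sub_sum_range]
    rfl
  have hswap : ∀ x y v, F x y v = F y x (v.1, v.2.2, v.2.1) :=
    fun x y v => sum_congr rfl fun k _ => by ring
  rw [hPhi s' s, map_level_swap hσ hσt hσ0 hσt0, hPhi s s', Multiset.map_map, Multiset.map_map]
  congr 1
  exact Multiset.map_congr rfl fun ℓ _ => hswap s' s _

theorem Phi_symmetric (L : ℕ) (hL : Even L) (hL0 : 0 < L) (d : ℕ) (hd : 2 ≤ d)
    (q : ℂ) (hq0 : q ≠ 0) (hq2 : ∀ m : ℕ, 1 ≤ m → m ≤ d - 1 → q ^ (2 * m) ≠ 1)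
    (z : ℂ) (σ σt : ℕ → ℤ)
    (hσ : ∀ ℓ < L, σ ℓ = 1 ∨ σ ℓ = -1) (hσt : ∀ ℓ < L, σt ℓ = 1 ∨ σt ℓ = -1)
    (hσ0 : ∑ ℓ ∈ Finset.range L, σ ℓ = 0) (hσt0 : ∑ ℓ ∈ Finset.range L, σt ℓ = 0)
    (s s' : ℂ) (hs : s ≠ 0) (hs' : s' ≠ 0) :
    Phi q z d L σ σt s' s = Phi q z d L σ σt s s' :=
  Phi_symmetric_general L d q z σ σt hσ hσt hσ0 hσt0 s s'
end

section
/- Let q ∈ ℂ*, L a positive integer, h: ℂ* → ℂ, and Q: ℂ* → ℂ* a nowhere-vanishing function. Define T^{(j)}: ℂ* → ℂ for j ≥ 0 by T^{(0)} = 0 and T^{(j)}(s) = Q(q^{−1}s) Q(q^{j−1}s) ∑_{k=0}^{j−1} h(q^{k−1}s)^L / (Q(q^{k−1}s) Q(q^k s)) for j ≥ 1. Then T^{(1)}(s) = h(q^{−1}s)^L, and for all j ≥ 1 and s ∈ ℂ*: T^{(j)}(s)·T^{(2)}(q^{j−1}s) = h(q^{j−1}s)^L · T^{(j−1)}(s)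 + h(q^{j−2}s)^L · T^{(j+1)}(s). -/
/-- The scalar `T^{(j)}(s)` defined from `Q` and `h` by the `T^{(j)}Q`-formula. -/
noncomputable def Tfun (q : ℂ) (L : ℕ) (h Q : ℂ → ℂ) (j : ℕ) (s : ℂ) : ℂ :=
  Q (q⁻¹ * s) * Q (q ^ ((j : ℤ) - 1) * s)
    * ∑ k ∈ Finset.range j,
        h (q ^ ((k : ℤ) - 1) * s) ^ L / (Q (q ^ ((k : ℤ) - 1) * s) * Q (q ^ (k : ℤ) * s))

/-! With `a k = Q (q ^ (k - 1) * s)` and `u k = h (q ^ (k - 1) * s) ^ L`, `T^{(j)}(s)` is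
`a 0 * a j * S j` for the partial sums `S j = ∑_{k < j} u k / (a k * a (k + 1))`, and `T^{(2)}` at
`q ^ (j - 1) * s` is the same expression for the shifted sequences. The fusion relation is then a
rational identity in `a j, a (j + 1), a (j + 2)` once `S (j + 1)` and `S (j + 2)` are expressed
through `S j`. -/

open Finset

section Field

variable {K : Type*} [Field K]

def fusionT (a u : ℕ → K) (j : ℕ) : K :=
  a 0 * a j * ∑ k ∈ range j, u k / (a k * a (k + 1))

theorem fusionT_one {a : ℕ → K} (u : ℕ → K) (h₀ : a 0 ≠ 0) (h₁ : a 1 ≠ 0) :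
    fusionT a u 1 = u 0 := by
  simp only [fusionT, sum_range_one, zero_add]
  field_simp

theorem fusionT_two (a u : ℕ → K) :
    fusionT a u 2 = a 0 * a 2 * (u 0 / (a 0 * a 1) + u 1 / (a 1 * a 2)) := by
  simp [fusionT, sum_range_succ]

theorem fusionT_succ_mul_fusionT_two {a : ℕ → K} (u : ℕ → K) (j : ℕ)
    (hj : a j ≠ 0) (hj₁ : a (j + 1) ≠ 0) (hj₂ : a (j + 2) ≠ 0) :
    fusionT a u (j + 1) * fusionT (fun k ↦ a (k + j)) (fun k ↦ u (k + j)) 2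
      = u (j + 1) * fusionT a u j + u j * fusionT a u (j + 2) := by
  rw [fusionT_two]
  simp only [fusionT, sum_range_succ, zero_add]
  rw [add_comm 1 j, add_comm 2 j]
  field_simp
  ring

theorem zpow_natCast_sub_one_mul_zpow_mul {q : K} (hq : q ≠ 0) (k m : ℕ) (s : K) :
    q ^ ((k : ℤ) - 1) * (q ^ (m : ℤ) * s) = q ^ (((k + m : ℕ) : ℤ) - 1) * s := by
  rw [← mul_assoc, ← zpow_add₀ hq]
  push_cast
  ring_nf

end Field

theorem Tfun_eq_fusionT (q : ℂ) (L : ℕ) (h Q : ℂ → ℂ) (j : ℕ) (s : ℂ) :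
    Tfun q L h Q j s
      = fusionT (fun k : ℕ ↦ Q (q ^ ((k : ℤ) - 1) * s))
          (fun k : ℕ ↦ h (q ^ ((k : ℤ) - 1) * s) ^ L) j := by
  simp [Tfun, fusionT]

theorem fusion_hierarchy_general (q : ℂ) (hq0 : q ≠ 0) (L : ℕ)
    (h Q : ℂ → ℂ) (hQ : ∀ s : ℂ, s ≠ 0 → Q s ≠ 0) :
    (∀ s : ℂ, s ≠ 0 → Tfun q L h Q 1 s = h (q⁻¹ * s) ^ L) ∧
    (∀ j : ℕ, 1 ≤ j → ∀ s : ℂ, s ≠ 0 →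
      Tfun q L h Q j s * Tfun q L h Q 2 (q ^ ((j : ℤ) - 1) * s)
        = h (q ^ ((j : ℤ) - 1) * s) ^ L * Tfun q L h Q (j - 1) s
          + h (q ^ ((j : ℤ) - 2) * s) ^ L * Tfun q L h Q (j + 1) s) := by
  have hQ' : ∀ s ≠ 0, ∀ k : ℕ, Q (q ^ ((k : ℤ) - 1) * s) ≠ 0 := fun s hs k ↦
    hQ _ (mul_ne_zero (zpow_ne_zero _ hq0) hs)
  refine ⟨fun s hs ↦ ?_, fun j hj s hs ↦ ?_⟩
  · rw [Tfun_eq_fusionT, fusionT_one _ (hQ' s hs 0) (hQ' s hs 1)]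
    simp
  · obtain ⟨m, rfl⟩ := Nat.exists_eq_add_of_le' hj
    have hshift : ((m + 1 : ℕ) : ℤ) - 1 = m := by push_cast; ring
    rw [Nat.add_sub_cancel, hshift]
    simp only [Tfun_eq_fusionT, zpow_natCast_sub_one_mul_zpow_mul hq0]
    convert fusionT_succ_mul_fusionT_two (a := fun k : ℕ ↦ Q (q ^ ((k : ℤ) - 1) * s))
      (fun k : ℕ ↦ h (q ^ ((k : ℤ) - 1) * s) ^ L) m
      (hQ' s hs m) (hQ' s hs (m + 1)) (hQ' s hs (m + 2)) using 3 <;> push_cast <;> ring_nf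

theorem fusion_hierarchy (q : ℂ) (hq0 : q ≠ 0) (L : ℕ) (hL : 0 < L)
    (h Q : ℂ → ℂ) (hQ : ∀ s : ℂ, s ≠ 0 → Q s ≠ 0) :
    (∀ s : ℂ, s ≠ 0 → Tfun q L h Q 1 s = h (q⁻¹ * s) ^ L) ∧
    (∀ j : ℕ, 1 ≤ j → ∀ s : ℂ, s ≠ 0 →
      Tfun q L h Q j s * Tfun q L h Q 2 (q ^ ((j : ℤ) - 1) * s)
        = h (q ^ ((j : ℤ) - 1) * s) ^ L * Tfun q L h Q (j - 1) s
          + h (q ^ ((j : ℤ) - 2) * s) ^ L * Tfun q L h Q (j + 1) s) :=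
  fusion_hierarchy_general q hq0 L h Q hQ
end
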